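/- For every positive integer n, the closed equilateral H-triangle of side length n + 1/n can be covered by n² + 3 closed unit equilateral H-triangles. -/
import Mathlib


noncomputable section

abbrev Pt : Type := EuclideanSpace ℝ (Fin 2)

/-- `T` is a closed equilateral H-triangle of side length `s`: the convex hull of three
points at pairwise distance `s > 0`, one side of which is parallel to the x-axis. -/
def IsEquilateralHTriangle (T : Set Pt) (s : ℝ) : Prop :=
  0 < s ∧ ∃ A B C : Pt, dist A B = s ∧ dist B C = s ∧ dist C A = s ∧ A 1 = B 1 ∧
    T = convexHull ℝ {A, B, C}

namespace Statement8Aux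

def pt (x y : ℝ) : Pt := (WithLp.equiv 2 (Fin 2 → ℝ)).symm ![x, y]
@[simp] lemma pt0 (x y : ℝ) : pt x y 0 = x := rfl
@[simp] lemma pt1 (x y : ℝ) : pt x y 1 = y := rfl
@[simp] lemma addc (p q : Pt) (i : Fin 2) : (p + q) i = p i + q i := rfl
@[simp] lemma smulc (a : ℝ) (p : Pt) (i : Fin 2) : (a • p) i = a * p i := rfl

local notation "√3" => Real.sqrt 3
lemma s3pos : (0:ℝ) < √3 := by positivity
lemma s3sq : √3 * √3 = 3 := Real.mul_self_sqrt (by norm_num)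

lemma pt_eta (p : Pt) : p = pt (p 0) (p 1) := by
  ext i; fin_cases i <;> rfl
lemma dist_pt (x y x' y' : ℝ) : dist (pt x y) (pt x' y') = Real.sqrt ((x-x')^2 + (y-y')^2) := by
  rw [EuclideanSpace.dist_eq]
  simp [Fin.sum_univ_two, Real.dist_eq, sq_abs]

def upS (a b s : ℝ) : Set Pt :=
  {p | b ≤ p 1 ∧ p 1 - b ≤ √3 * (p 0 - a) ∧ p 1 - b ≤ √3 * (a + s - p 0)}
def downS (a b s : ℝ) : Set Pt :=
  {p | p 1 ≤ b ∧ b - p 1 ≤ √3 * (p 0 - a) ∧ b - p 1 ≤ √3 * (a + s - p 0)}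

lemma convex_upS (a b s : ℝ) : Convex ℝ (upS a b s) := by
  intro x hx y hy u v hu hv huv
  obtain ⟨h1,h2,h3⟩ := hx; obtain ⟨k1,k2,k3⟩ := hy
  have e1 : u*b + v*b = b := by linear_combination b*huv
  have e2 : √3*(u * x 0 + v * y 0 - a) = u*(√3*(x 0 - a)) + v*(√3*(y 0 - a)) := by
    linear_combination (Real.sqrt 3 * a) * huv
  have e3 : √3*(a + s - (u * x 0 + v * y 0)) = u*(√3*(a + s - x 0)) + v*(√3*(a + s - y 0)) := by
    linear_combination (-(Real.sqrt 3 * (a+s))) * huv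
  refine ⟨?_, ?_, ?_⟩ <;> simp only [addc, smulc]
  · nlinarith [mul_le_mul_of_nonneg_left h1 hu, mul_le_mul_of_nonneg_left k1 hv]
  · rw [e2]; nlinarith [mul_le_mul_of_nonneg_left h2 hu, mul_le_mul_of_nonneg_left k2 hv]
  · rw [e3]; nlinarith [mul_le_mul_of_nonneg_left h3 hu, mul_le_mul_of_nonneg_left k3 hv]

lemma convex_downS (a b s : ℝ) : Convex ℝ (downS a b s) := by
  intro x hx y hy u v hu hv huv
  obtain ⟨h1,h2,h3⟩ := hx; obtain ⟨k1,k2,k3⟩ := hy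
  have e1 : u*b + v*b = b := by linear_combination b*huv
  have e2 : √3*(u * x 0 + v * y 0 - a) = u*(√3*(x 0 - a)) + v*(√3*(y 0 - a)) := by
    linear_combination (Real.sqrt 3 * a) * huv
  have e3 : √3*(a + s - (u * x 0 + v * y 0)) = u*(√3*(a + s - x 0)) + v*(√3*(a + s - y 0)) := by
    linear_combination (-(Real.sqrt 3 * (a+s))) * huv
  refine ⟨?_, ?_, ?_⟩ <;> simp only [addc, smulc]
  · nlinarith [mul_le_mul_of_nonneg_left h1 hu, mul_le_mul_of_nonneg_left k1 hv]
  · rw [e2]; nlinarith [mul_le_mul_of_nonneg_left h2 hu, mul_le_mul_of_nonneg_left k2 hv]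
  · rw [e3]; nlinarith [mul_le_mul_of_nonneg_left h3 hu, mul_le_mul_of_nonneg_left k3 hv]

lemma combo_mem_hull (A B C : Pt) (w0 w1 w2 : ℝ) (h0 : 0 ≤ w0) (h1 : 0 ≤ w1) (h2 : 0 ≤ w2)
    (hs : w0 + w1 + w2 = 1) : w0 • A + w1 • B + w2 • C ∈ convexHull ℝ ({A, B, C} : Set Pt) := by
  have ht : ∑ i : Fin 3, (![w0,w1,w2]) i = 1 := by simp [Fin.sum_univ_three]; linarith
  have := Finset.centerMass_mem_convexHull (Finset.univ : Finset (Fin 3))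
    (w := ![w0,w1,w2]) (z := ![A,B,C]) (s := ({A, B, C} : Set Pt)) ?_ (by rw [ht]; norm_num) ?_
  · rw [Finset.centerMass_eq_of_sum_1 _ _ ht, Fin.sum_univ_three] at this
    simpa using this
  · intro i _; fin_cases i <;> simpa
  · intro i _; fin_cases i <;> simp

lemma hull_eq_upS (a b s : ℝ) (hs : 0 < s) :
    convexHull ℝ {pt a b, pt (a+s) b, pt (a+s/2) (b + s*(√3/2))} = upS a b s := by
  have hs3 := s3pos
  apply le_antisymm
  · apply convexHull_min ?_ (convex_upS a b s)
    intro p hp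
    rcases hp with rfl | rfl | rfl <;>
      refine ⟨?_, ?_, ?_⟩ <;> simp <;> nlinarith [s3pos, s3sq, hs]
  · intro p hp
    obtain ⟨h1, h2, h3⟩ := hp
    have hpe : p = ((√3*(a+s-p 0) - (p 1-b)) / (√3*s)) • pt a b
        + ((√3*(p 0-a) - (p 1-b)) / (√3*s)) • pt (a+s) b
        + (2*(p 1-b)/(√3*s)) • pt (a+s/2) (b + s*(√3/2)) := by
      ext i; fin_cases i <;> simp <;> field_simp <;> ring
    rw [hpe]
    apply combo_mem_hull
    · exact div_nonneg (by linarith) (by positivity)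
    · exact div_nonneg (by linarith) (by positivity)
    · exact div_nonneg (by linarith) (by positivity)
    · field_simp; ring

lemma hull_eq_downS (a b s : ℝ) (hs : 0 < s) :
    convexHull ℝ {pt a b, pt (a+s) b, pt (a+s/2) (b - s*(√3/2))} = downS a b s := by
  have hs3 := s3pos
  apply le_antisymm
  · apply convexHull_min ?_ (convex_downS a b s)
    intro p hp
    rcases hp with rfl | rfl | rfl <;>
      refine ⟨?_, ?_, ?_⟩ <;> simp <;> nlinarith [s3pos, s3sq, hs]
  · intro p hp
    obtain ⟨h1, h2, h3⟩ := hp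
    have hpe : p = ((√3*(a+s-p 0) - (b-p 1)) / (√3*s)) • pt a b
        + ((√3*(p 0-a) - (b-p 1)) / (√3*s)) • pt (a+s) b
        + (2*(b-p 1)/(√3*s)) • pt (a+s/2) (b - s*(√3/2)) := by
      ext i; fin_cases i <;> simp <;> field_simp <;> ring
    rw [hpe]
    apply combo_mem_hull
    · exact div_nonneg (by linarith) (by positivity)
    · exact div_nonneg (by linarith) (by positivity)
    · exact div_nonneg (by linarith) (by positivity)
    · field_simp; ring

abbrev Desc : Type := Bool × ℝ × ℝ
def reaL (d : Desc) : Set Pt := if d.1 then upS d.2.1 d.2.2 1 else downS d.2.1 d.2.2 1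

lemma isEq_reaL (d : Desc) : IsEquilateralHTriangle (reaL d) 1 := by
  obtain ⟨o, a, b⟩ := d
  have d1 : dist (pt a b) (pt (a+1) b) = 1 := by
    rw [dist_pt]; norm_num
  have h34 : (1:ℝ)/4 + 3/4 = 1 := by norm_num
  cases o
  · refine ⟨one_pos, pt a b, pt (a+1) b, pt (a+1/2) (b - 1*(√3/2)), d1, ?_, ?_, rfl, ?_⟩
    · rw [dist_pt]
      have : (a+1-(a+1/2))^2 + (b-(b - 1*(√3/2)))^2 = 1 := by
        linear_combination (1/4)*s3sq
      rw [this, Real.sqrt_one]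
    · rw [dist_pt]
      have : (a+1/2-a)^2 + ((b - 1*(√3/2))-b)^2 = 1 := by
        linear_combination (1/4)*s3sq
      rw [this, Real.sqrt_one]
    · show downS a b 1 = _
      rw [← hull_eq_downS a b 1 one_pos]
  · refine ⟨one_pos, pt a b, pt (a+1) b, pt (a+1/2) (b + 1*(√3/2)), d1, ?_, ?_, rfl, ?_⟩
    · rw [dist_pt]
      have : (a+1-(a+1/2))^2 + (b-(b + 1*(√3/2)))^2 = 1 := by
        linear_combination (1/4)*s3sq
      rw [this, Real.sqrt_one]
    · rw [dist_pt]
      have : (a+1/2-a)^2 + ((b + 1*(√3/2))-b)^2 = 1 := by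
        linear_combination (1/4)*s3sq
      rw [this, Real.sqrt_one]
    · show upS a b 1 = _
      rw [← hull_eq_upS a b 1 one_pos]

def shiftD (u v : ℝ) (d : Desc) : Desc := (d.1, d.2.1 + u, d.2.2 + v)
def flipD (u w : ℝ) (d : Desc) : Desc := (!d.1, d.2.1 + u, w - d.2.2)

lemma mem_shift (u v : ℝ) (d : Desc) (p : Pt) :
    p ∈ reaL (shiftD u v d) ↔ pt (p 0 - u) (p 1 - v) ∈ reaL d := by
  obtain ⟨o, a, b⟩ := d
  cases o <;> simp only [reaL, shiftD, upS, downS, Set.mem_setOf_eq, if_true, if_false,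
    Bool.false_eq_true, pt0, pt1] <;>
    constructor <;> rintro ⟨x1, x2, x3⟩ <;>
    exact ⟨by linarith, by linarith, by linarith⟩

lemma mem_flip (u w : ℝ) (d : Desc) (p : Pt) :
    p ∈ reaL (flipD u w d) ↔ pt (p 0 - u) (w - p 1) ∈ reaL d := by
  obtain ⟨o, a, b⟩ := d
  cases o <;> simp only [reaL, flipD, upS, downS, Set.mem_setOf_eq, if_true, if_false,
    Bool.not_false, Bool.not_true, Bool.false_eq_true, pt0, pt1] <;>
    constructor <;> rintro ⟨x1, x2, x3⟩ <;>
    exact ⟨by linarith, by linarith, by linarith⟩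

def L (m : ℕ) : ℝ := if m = 0 then 1 else m + 1/m
def sig (m : ℕ) : ℝ := 2 - (L m - L (m-1))
def Unum (m : ℕ) : ℕ := if m = 1 then 2 else m

def strip (m : ℕ) : List Desc :=
  ((List.range (Unum m)).map fun j : ℕ => (true, -(L m)/2 + (j:ℝ) * sig m, -(L m)*(√3/2)))
  ++ ((List.range (Unum m - 1)).map fun j : ℕ =>
      (false, -(L m)/2 + (j:ℝ) * sig m + sig m/2, -(L (m-1))*(√3/2)))

def covF : ℕ → List Desc
  | 0 => [(true, -(1/2), -(√3/2))]
  | n+1 => covF n ++ strip (n+1)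

lemma covF_len (n : ℕ) (hn : 1 ≤ n) : (covF n).length = n^2 + 3 := by
  induction n, hn using Nat.le_induction with
  | base => simp [covF, strip, Unum]
  | succ n hn ih =>
    have hU : Unum (n+1) = n+1 := by simp [Unum]; omega
    have : (strip (n+1)).length = (n+1) + n := by simp [strip, hU]
    have hsq : (n+1)^2 = n^2 + 2*n + 1 := by ring
    simp only [covF, List.length_append, ih, this]
    omega

lemma strip_cover (x₀ Y σ : ℝ) (U : ℕ) (hU : 1 ≤ U) (q : Pt)
    (hY : Y ≤ q 1) (hh : q 1 ≤ Y + (2 - σ)*(√3/2))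
    (hl : q 1 - Y ≤ √3 * (q 0 - x₀))
    (hr : q 1 - Y ≤ √3 * (x₀ + ((U:ℝ)-1)*σ + 1 - q 0)) :
    (∃ j < U, q ∈ upS (x₀ + (j:ℝ)*σ) Y 1) ∨
    (∃ j < U - 1, q ∈ downS (x₀ + (j:ℝ)*σ + σ/2) (Y + (2-σ)*(√3/2)) 1) := by
  induction U, hU using Nat.le_induction with
  | base =>
    left; exact ⟨0, by norm_num, hY, by push_cast; linarith, by push_cast at hr ⊢; linarith⟩
  | succ U hU ih =>
    by_cases hc : q 1 - Y ≤ √3 * (q 0 - (x₀ + (U:ℝ)*σ))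
    · left
      refine ⟨U, by omega, hY, by linarith [hc], ?_⟩
      push_cast at hr
      have : √3 * (x₀ + (U:ℝ)*σ + 1 - q 0) = √3 * (x₀ + ((U:ℝ)+1-1)*σ + 1 - q 0) := by ring
      linarith [hr, this.ge]
    · by_cases hd : q 1 - Y ≤ √3 * (x₀ + ((U:ℝ)-1)*σ + 1 - q 0)
      · rcases ih hd with ⟨j, hj, hm⟩ | ⟨j, hj, hm⟩
        · exact Or.inl ⟨j, by omega, hm⟩
        · exact Or.inr ⟨j, by omega, hm⟩
      · right
        push_neg at hc hd
        refine ⟨U - 1, by omega, ?_, ?_, ?_⟩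
        · exact hh
        · have hcast : ((U - 1 : ℕ) : ℝ) = (U:ℝ) - 1 := by
            have : (1:ℕ) ≤ U := hU; push_cast [this]; ring
          rw [hcast]
          nlinarith [hd, s3pos]
        · have hcast : ((U - 1 : ℕ) : ℝ) = (U:ℝ) - 1 := by
            have : (1:ℕ) ≤ U := hU; push_cast [this]; ring
          rw [hcast]
          nlinarith [hc, s3pos]

lemma L_eq (m : ℕ) (hm : m ≠ 0) : L m = m + 1/m := by simp [L, hm]
lemma L_zero : L 0 = 1 := by simp [L]

lemma keyid (n : ℕ) : ((Unum (n+1) : ℝ) - 1) * sig (n+1) + 1 = L (n+1) := by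
  have hs : sig (n+1) = 2 - (L (n+1) - L n) := by simp [sig]
  rcases Nat.eq_zero_or_pos n with rfl | hn
  · norm_num [Unum, hs, L_zero, L_eq 1 one_ne_zero]
  · have h1 : Unum (n+1) = n+1 := by simp [Unum]; omega
    have hn0 : (n:ℝ) ≠ 0 := Nat.cast_ne_zero.mpr (by omega)
    have hn1 : ((n:ℝ)+1) ≠ 0 := by positivity
    rw [h1, hs, L_eq (n+1) (by omega), L_eq n (by omega)]
    push_cast
    field_simp
    ring

lemma cover (n : ℕ) (q : Pt) (h1 : -(L n)*(√3/2) ≤ q 1) (h2 : q 1 ≤ √3 * q 0)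
    (h3 : q 1 ≤ -(√3 * q 0)) : ∃ d ∈ covF n, q ∈ reaL d := by
  induction n with
  | zero =>
    refine ⟨(true, -(1/2), -(√3/2)), by simp [covF], ?_⟩
    rw [L_zero] at h1
    exact ⟨by linarith, by nlinarith [s3pos], by nlinarith [s3pos]⟩
  | succ n ih =>
    by_cases hcase : -(L n)*(√3/2) ≤ q 1
    · obtain ⟨d, hd, hq⟩ := ih hcase
      exact ⟨d, List.mem_append.mpr (Or.inl hd), hq⟩
    · push_neg at hcase
      have hU : 1 ≤ Unum (n+1) := by simp [Unum]; split <;> omega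
      have hsig : (2 : ℝ) - sig (n+1) = L (n+1) - L n := by simp [sig]
      have hkey := keyid n
      have hkey3 : √3*(((Unum (n+1):ℝ) - 1) * sig (n+1) + 1) = √3 * L (n+1) := by rw [hkey]
      have hh2 : q 1 ≤ -(L (n+1))*(√3/2) + (2 - sig (n+1))*(√3/2) := by
        rw [hsig]; linarith
      have hl2 : q 1 - (-(L (n+1))*(√3/2)) ≤ √3 * (q 0 - (-(L (n+1))/2)) := by
        nlinarith [h2]
      have hr2 : q 1 - (-(L (n+1))*(√3/2)) ≤
          √3 * ((-(L (n+1))/2) + ((Unum (n+1):ℝ)-1)*(sig (n+1)) + 1 - q 0) := by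
        nlinarith [h3, hkey3]
      have hsc := strip_cover (-(L (n+1))/2) (-(L (n+1))*(√3/2)) (sig (n+1)) (Unum (n+1)) hU q
        h1 hh2 hl2 hr2
      rcases hsc with ⟨j, hj, hm⟩ | ⟨j, hj, hm⟩
      · refine ⟨(true, -(L (n+1))/2 + (j:ℝ) * sig (n+1), -(L (n+1))*(√3/2)), ?_, ?_⟩
        · refine List.mem_append.mpr (Or.inr (List.mem_append.mpr (Or.inl ?_)))
          exact List.mem_map_of_mem
            (f := fun j : ℕ => ((true, -(L (n+1))/2 + (j:ℝ) * sig (n+1),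
              -(L (n+1))*(√3/2)) : Desc)) (List.mem_range.mpr hj)
        · simpa [reaL] using hm
      · refine ⟨(false, -(L (n+1))/2 + (j:ℝ) * sig (n+1) + sig (n+1)/2, -(L n)*(√3/2)), ?_, ?_⟩
        · refine List.mem_append.mpr (Or.inr (List.mem_append.mpr (Or.inr ?_)))
          exact List.mem_map_of_mem
            (f := fun j : ℕ => ((false, -(L (n+1))/2 + (j:ℝ) * sig (n+1) + sig (n+1)/2,
              -(L ((n+1)-1))*(√3/2)) : Desc)) (List.mem_range.mpr hj)
        · have he : -(L (n+1))*(√3/2) + (2 - sig (n+1))*(√3/2) = -(L n)*(√3/2) := by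
            rw [hsig]; ring
          rw [reaL]
          simp only []
          rw [← he]
          exact hm

lemma dist_sq (P Q : Pt) (s : ℝ) (h : dist P Q = s) :
    (P 0 - Q 0)^2 + (P 1 - Q 1)^2 = s^2 := by
  rw [pt_eta P, pt_eta Q, dist_pt] at h
  rw [← h, Real.sq_sqrt (by positivity)]

lemma normAux (s : ℝ) (hs : 0 < s) (T : Set Pt) (A B C : Pt) (hBC : dist B C = s)
    (hCA : dist C A = s) (hy : A 1 = B 1) (hx : B 0 = A 0 + s)
    (hTeq : T = convexHull ℝ {A, B, C}) :
    ∃ u v : ℝ, T = upS u v s ∨ T = downS u v s := by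
  have e1 := dist_sq C A s hCA
  have e2 := dist_sq B C s hBC
  rw [hx, ← hy] at e2
  have hsne : s ≠ 0 := ne_of_gt hs
  have hC0 : C 0 = A 0 + s/2 := by
    have h' : (2*s)*(C 0 - (A 0 + s/2)) = 0 := by linear_combination e1 - e2
    rcases mul_eq_zero.mp h' with h'' | h''
    · exact absurd h'' (by positivity)
    · linarith
  have hC1 : (C 1 - A 1 - s*(√3/2))*(C 1 - A 1 + s*(√3/2)) = 0 := by
    linear_combination e1 - (C 0 - A 0 + s/2)*hC0 - (s^2/4)*s3sq
  have hA : A = pt (A 0) (A 1) := pt_eta A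
  have hB : B = pt (A 0 + s) (A 1) := by rw [pt_eta B, hx, ← hy]
  rcases mul_eq_zero.mp hC1 with h | h
  · have hC1v : C 1 = A 1 + s*(√3/2) := by linarith
    have hC : C = pt (A 0 + s/2) (A 1 + s*(√3/2)) := by rw [pt_eta C, hC0, hC1v]
    have hset : ({A, B, C} : Set Pt)
        = {pt (A 0) (A 1), pt (A 0 + s) (A 1), pt (A 0 + s/2) (A 1 + s*(√3/2))} := by
      rw [← hA, ← hB, ← hC]
    refine ⟨A 0, A 1, Or.inl ?_⟩
    rw [hTeq, hset]
    exact hull_eq_upS (A 0) (A 1) s hs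
  · have hC1v : C 1 = A 1 - s*(√3/2) := by linarith
    have hC : C = pt (A 0 + s/2) (A 1 - s*(√3/2)) := by rw [pt_eta C, hC0, hC1v]
    have hset : ({A, B, C} : Set Pt)
        = {pt (A 0) (A 1), pt (A 0 + s) (A 1), pt (A 0 + s/2) (A 1 - s*(√3/2))} := by
      rw [← hA, ← hB, ← hC]
    refine ⟨A 0, A 1, Or.inr ?_⟩
    rw [hTeq, hset]
    exact hull_eq_downS (A 0) (A 1) s hs

lemma normalize (s : ℝ) (hs : 0 < s) (T : Set Pt) (A B C : Pt) (hAB : dist A B = s)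
    (hBC : dist B C = s) (hCA : dist C A = s) (hy : A 1 = B 1)
    (hTeq : T = convexHull ℝ {A, B, C}) :
    ∃ u v : ℝ, T = upS u v s ∨ T = downS u v s := by
  have e0 := dist_sq A B s hAB
  have hfac : (B 0 - A 0 - s)*(B 0 - A 0 + s) = 0 := by
    linear_combination e0 - (A 1 - B 1)*hy
  rcases mul_eq_zero.mp hfac with h | h
  · exact normAux s hs T A B C hBC hCA hy (by linarith) hTeq
  · refine normAux s hs T B A C (by rw [dist_comm]; exact hCA) (by rw [dist_comm]; exact hBC)
      hy.symm (by linarith) ?_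
    rw [hTeq, Set.insert_comm]

end Statement8Aux

open Statement8Aux

/-- An equilateral H-triangle of side length n + 1/n can be covered by n² + 3 unit
equilateral H-triangles. -/
theorem statement8 (n : ℕ) (hn : 0 < n)
    (T : Set Pt) (hT : IsEquilateralHTriangle T ((n : ℝ) + 1 / (n : ℝ))) :
    ∃ S : Fin (n ^ 2 + 3) → Set Pt,
      (∀ i, IsEquilateralHTriangle (S i) 1) ∧ T ⊆ ⋃ i, S i := by
  obtain ⟨hspos, A, B, C, hAB, hBC, hCA, hy, hTeq⟩ := hT
  set s : ℝ := (n : ℝ) + 1 / (n : ℝ) with hsdef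
  have hLn : L n = s := by rw [L_eq n (by omega), hsdef]
  clear_value s
  have hlen : (covF n).length = n ^ 2 + 3 := covF_len n hn
  have hs3 := Statement8Aux.s3pos
  obtain ⟨u, v, hcase⟩ := normalize s hspos T A B C hAB hBC hCA hy hTeq
  rcases hcase with hup | hdown
  · refine ⟨fun i => reaL (shiftD (u + s/2) (v + s*((Real.sqrt 3)/2))
      ((covF n).get (Fin.cast hlen.symm i))), fun i => isEq_reaL _, ?_⟩
    intro p hp
    rw [hup] at hp
    obtain ⟨c1, c2, c3⟩ := hp
    set q : Pt := pt (p 0 - (u + s/2)) (p 1 - (v + s*((Real.sqrt 3)/2))) with hq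
    have hcov := cover n q (by rw [hLn]; simp [hq]; linarith)
      (by simp [hq]; linarith) (by simp [hq]; linarith)
    obtain ⟨d, hd, hqd⟩ := hcov
    obtain ⟨k, hk⟩ := List.mem_iff_get.mp hd
    refine Set.mem_iUnion.mpr ⟨Fin.cast hlen k, ?_⟩
    have hgk : (covF n).get (Fin.cast hlen.symm (Fin.cast hlen k)) = d := by
      rw [← hk]; congr 1
    rw [hgk, mem_shift]
    exact hqd
  · refine ⟨fun i => reaL (flipD (u + s/2) (v - s*((Real.sqrt 3)/2))
      ((covF n).get (Fin.cast hlen.symm i))), fun i => isEq_reaL _, ?_⟩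
    intro p hp
    rw [hdown] at hp
    obtain ⟨c1, c2, c3⟩ := hp
    set q : Pt := pt (p 0 - (u + s/2)) ((v - s*((Real.sqrt 3)/2)) - p 1) with hq
    have hcov := cover n q (by rw [hLn]; simp [hq]; linarith)
      (by simp [hq]; linarith) (by simp [hq]; linarith)
    obtain ⟨d, hd, hqd⟩ := hcov
    obtain ⟨k, hk⟩ := List.mem_iff_get.mp hd
    refine Set.mem_iUnion.mpr ⟨Fin.cast hlen k, ?_⟩
    have hgk : (covF n).get (Fin.cast hlen.symm (Fin.cast hlen k)) = d := by
      rw [← hk]; congr 1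
    rw [hgk, mem_flip]
    exact hqd
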